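/- arXiv:math/0703269 — 3 statements merged into one kernel-verified Lean document; each statement's English description precedes it below -/
import Mathlib

section
/- Conditional on exactly k edges surviving independent edge-retention with probability p applied to a uniformly random perfect matching on a set P of 2M points, the set of the 2k endpoints of the surviving edges is uniformly distributed among all 2k-element subsets of P. -/
open scoped Classical BigOperators

/-- Probability weight of a retention pattern `g` on potential edges:
each unordered pair is independently retained (`true`) with probability `p`. -/
noncomputable def edgeWeight {α : Type*} [Fintype α] [DecidableEq α]
    (p : ℝ) (g : Sym2 α → Bool) : ℝ :=
  ∏ e : Sym2 α, if g e then p else 1 - p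

/-- The set of points whose matching edge survives the retention pattern `g`. -/
noncomputable def survivors {α : Type*} [Fintype α] [DecidableEq α]
    (f : α → α) (g : Sym2 α → Bool) : Finset α :=
  Finset.univ.filter fun x => g (Sym2.mk x (f x)) = true


section Aux
variable {α : Type*} [Fintype α] [DecidableEq α]

/-- the equiv of `Sym2 α` induced by a permutation -/
def sym2Perm (σ : Equiv.Perm α) : Equiv.Perm (Sym2 α) where
  toFun := Sym2.map σ
  invFun := Sym2.map σ.symm
  left_inv e := by simp [Sym2.map_map]
  right_inv e := by simp [Sym2.map_map]

lemma edgeWeight_comp (p : ℝ) (σ : Equiv.Perm α) (g : Sym2 α → Bool) :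
    edgeWeight p (fun e => g (Sym2.map σ e)) = edgeWeight p g := by
  unfold edgeWeight
  exact Equiv.prod_comp (sym2Perm σ) (fun e => if g e then p else 1 - p)

lemma survivors_conj (σ : Equiv.Perm α) (f : α → α) (g : Sym2 α → Bool) :
    survivors (fun x => σ (f (σ.symm x))) (fun e => g (Sym2.map σ.symm e))
      = (survivors f g).image σ := by
  ext x
  simp only [survivors, Finset.mem_filter, Finset.mem_image, Finset.mem_univ, true_and]
  constructor
  · intro h
    refine ⟨σ.symm x, ?_, by simp⟩
    simpa [Sym2.map_pair_eq] using h
  · rintro ⟨y, hy, rfl⟩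
    simpa [Sym2.map_pair_eq] using hy

noncomputable def Tsum (p : ℝ) (A : Finset α) : ℝ :=
  ∑ f : {f : α → α // Function.Involutive f ∧ ∀ x, f x ≠ x},
    ∑ g : Sym2 α → Bool, edgeWeight p g * (if survivors f.1 g = A then 1 else 0)

lemma Tsum_image (p : ℝ) (σ : Equiv.Perm α) (A : Finset α) :
    Tsum p (A.image σ) = Tsum p A := by
  unfold Tsum
  -- reindex f by conjugation
  have hFbij : Function.Bijective
      (fun f : {f : α → α // Function.Involutive f ∧ ∀ x, f x ≠ x} =>
        (⟨fun x => σ (f.1 (σ.symm x)), by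
            intro x; simp [f.2.1 (σ.symm x)], by
            intro x h
            exact f.2.2 (σ.symm x) (by simpa using congrArg σ.symm h)⟩ :
          {f : α → α // Function.Involutive f ∧ ∀ x, f x ≠ x})) := by
    rw [Function.bijective_iff_has_inverse]
    refine ⟨fun f => ⟨fun x => σ.symm (f.1 (σ x)), by
        intro x; simp [f.2.1 (σ x)], by
        intro x h
        exact f.2.2 (σ x) (by simpa using congrArg σ h)⟩, fun f => ?_, fun f => ?_⟩ <;>
      · apply Subtype.ext; funext x; simp
  rw [← Fintype.sum_bijective _ hFbij _ _ (fun f => ?_)]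
  -- now fix f, reindex g
  have hGbij : Function.Bijective
      (fun g : Sym2 α → Bool => (fun e => g (Sym2.map σ e) : Sym2 α → Bool)) := by
    rw [Function.bijective_iff_has_inverse]
    refine ⟨fun g => fun e => g (Sym2.map σ.symm e), fun g => ?_, fun g => ?_⟩ <;>
      · funext e; simp [Sym2.map_map]
  rw [← Fintype.sum_bijective _ hGbij _ _ (fun g => ?_)]
  have hw : edgeWeight p (fun e => g (Sym2.map σ e)) = edgeWeight p g :=
    edgeWeight_comp p σ g
  have key : survivors (fun x => σ (f.1 (σ.symm x))) g
      = (survivors f.1 (fun e => g (Sym2.map σ e))).image σ := by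
    have := survivors_conj σ f.1 (fun e => g (Sym2.map σ e))
    simpa [Sym2.map_map, Equiv.self_comp_symm] using this
  rw [hw, key]
  congr 1
  have : (survivors f.1 (fun e => g (Sym2.map σ e))).image σ = A.image σ
      ↔ survivors f.1 (fun e => g (Sym2.map σ e)) = A := by
    constructor
    · intro h; exact Finset.image_injective σ.injective h
    · intro h; rw [h]
  simp [this]

lemma exists_perm_image (A B : Finset α) (h : A.card = B.card) :
    ∃ σ : Equiv.Perm α, A.image σ = B := by
  have h1 : Fintype.card {x // x ∈ A} = Fintype.card {x // x ∈ B} := by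
    simp [Fintype.card_coe, h]
  have h2 : Fintype.card {x // x ∉ A} = Fintype.card {x // x ∉ B} := by
    simp only [Fintype.card_subtype_compl]
    simp [Fintype.card_coe, h]
  let e1 : {x // x ∈ A} ≃ {x // x ∈ B} := Fintype.equivOfCardEq h1
  let e2 : {x // x ∉ A} ≃ {x // x ∉ B} := Fintype.equivOfCardEq h2
  let σ : Equiv.Perm α :=
    ((Equiv.sumCompl (· ∈ A)).symm.trans (e1.sumCongr e2)).trans (Equiv.sumCompl (· ∈ B))
  refine ⟨σ, ?_⟩
  have hsub : A.image σ ⊆ B := by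
    intro y hy
    rw [Finset.mem_image] at hy
    obtain ⟨x, hx, rfl⟩ := hy
    have : σ x = (e1 ⟨x, hx⟩ : α) := by
      simp [σ, Equiv.sumCompl_symm_apply_of_pos (p := (· ∈ A)) hx]
    rw [this]
    exact (e1 ⟨x, hx⟩).2
  have : (A.image σ).card = B.card := by
    rw [Finset.card_image_of_injective _ σ.injective, h]
  exact Finset.eq_of_subset_of_card_le hsub (le_of_eq this.symm)

lemma exists_fpf_involutive (β : Type*) [Fintype β] [DecidableEq β] (n : ℕ)
    (h : Fintype.card β = 2 * n) :
    ∃ f : β → β, Function.Involutive f ∧ ∀ x, f x ≠ x := by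
  have e : β ≃ Fin n × Bool := Fintype.equivOfCardEq (by simp [h, mul_comm])
  refine ⟨fun x => e.symm ((e x).1, !(e x).2), fun x => by simp, fun x hx => ?_⟩
  have := congrArg e hx
  simp at this
  exact Bool.not_ne_self _ (congrArg Prod.snd this)

lemma edgeWeight_pos {p : ℝ} (hp : p ∈ Set.Ioo (0:ℝ) 1) (g : Sym2 α → Bool) :
    0 < edgeWeight p g := by
  unfold edgeWeight
  apply Finset.prod_pos
  intro e _
  split
  · exact hp.1
  · linarith [hp.2]

lemma Tsum_pos {M k : ℕ} (hcard : Fintype.card α = 2 * M) (hk : k ≤ M)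
    {p : ℝ} (hp : p ∈ Set.Ioo (0:ℝ) 1) (A : Finset α) (hA : A.card = 2 * k) :
    0 < Tsum p A := by
  -- construct f preserving A
  obtain ⟨fA, hfA1, hfA2⟩ := exists_fpf_involutive {x // x ∈ A} k (by simp [Fintype.card_coe, hA])
  obtain ⟨fC, hfC1, hfC2⟩ := exists_fpf_involutive {x // x ∉ A} (M - k)
    (by rw [Fintype.card_subtype_compl, Fintype.card_coe, hcard, hA]; omega)
  set f : α → α := fun x => if h : x ∈ A then (fA ⟨x, h⟩ : α) else (fC ⟨x, h⟩ : α) with hf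
  have hfmemA : ∀ x (h : x ∈ A), f x ∈ A := by
    intro x h; simp only [hf, dif_pos h]; exact (fA ⟨x, h⟩).2
  have hfmemC : ∀ x (h : x ∉ A), f x ∉ A := by
    intro x h; simp only [hf, dif_neg h]; exact (fC ⟨x, h⟩).2
  have hinv : Function.Involutive f := by
    intro x
    by_cases h : x ∈ A
    · simp only [hf, dif_pos h]
      rw [dif_pos ((fA ⟨x, h⟩).2)]
      simp only [Subtype.coe_eta]
      rw [hfA1]
    · simp only [hf, dif_neg h]
      rw [dif_neg ((fC ⟨x, h⟩).2)]
      simp only [Subtype.coe_eta]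
      rw [hfC1]
  have hfpf : ∀ x, f x ≠ x := by
    intro x hx
    by_cases h : x ∈ A
    · simp only [hf, dif_pos h] at hx
      exact hfA2 ⟨x, h⟩ (Subtype.ext hx)
    · simp only [hf, dif_neg h] at hx
      exact hfC2 ⟨x, h⟩ (Subtype.ext hx)
  -- witness g
  set g : Sym2 α → Bool := fun e => decide (∀ y ∈ e, y ∈ A) with hg
  have hsurv : survivors f g = A := by
    ext x
    simp only [survivors, Finset.mem_filter, Finset.mem_univ, true_and, hg,
      decide_eq_true_iff]
    constructor
    · intro h
      exact h x (Sym2.mem_mk_left x (f x))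
    · intro hx y hy
      rw [Sym2.mem_iff] at hy
      rcases hy with rfl | rfl
      · exact hx
      · exact hfmemA x hx
  -- positivity
  unfold Tsum
  have hnonneg : ∀ f0 : {f : α → α // Function.Involutive f ∧ ∀ x, f x ≠ x},
      0 ≤ ∑ g0 : Sym2 α → Bool, edgeWeight p g0 * (if survivors f0.1 g0 = A then 1 else 0) := by
    intro f0
    apply Finset.sum_nonneg
    intro g0 _
    have := edgeWeight_pos (α := α) hp g0
    positivity
  apply Finset.sum_pos'
  · intro f0 _; exact hnonneg f0
  · refine ⟨⟨f, hinv, hfpf⟩, Finset.mem_univ _, ?_⟩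
    apply Finset.sum_pos'
    · intro g0 _
      have := edgeWeight_pos (α := α) hp g0
      positivity
    · refine ⟨g, Finset.mem_univ _, ?_⟩
      rw [hsurv, if_pos rfl, mul_one]
      exact edgeWeight_pos hp g

end Aux

/-- Conditional on exactly `k` of the `M` edges of a uniformly random perfect matching
(on a set of `2M` points) surviving independent retention with probability `p`, the set of
the `2k` endpoints of the surviving edges is uniform among the `2k`-subsets: for any fixed
`2k`-subset `A`, the conditional probability that the surviving endpoint set equals `A`
is `1 / C(2M, 2k)`.  (The uniform-matching normalisation cancels in the ratio.) -/


theorem stmt2 {α : Type*} [Fintype α] [DecidableEq α] (M k : ℕ)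
    (hcard : Fintype.card α = 2 * M) (hk : k ≤ M)
    (p : ℝ) (hp : p ∈ Set.Ioo (0 : ℝ) 1)
    (A : Finset α) (hA : A.card = 2 * k) :
    (∑ f : {f : α → α // Function.Involutive f ∧ ∀ x, f x ≠ x},
        ∑ g : Sym2 α → Bool,
          edgeWeight p g * (if survivors f.1 g = A then 1 else 0)) /
    (∑ f : {f : α → α // Function.Involutive f ∧ ∀ x, f x ≠ x},
        ∑ g : Sym2 α → Bool,
          edgeWeight p g * (if (survivors f.1 g).card = 2 * k then 1 else 0))
    = 1 / ((2 * M).choose (2 * k)) := by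
  have hT : 0 < Tsum p A := Tsum_pos hcard hk hp A hA
  have hnum : (∑ f : {f : α → α // Function.Involutive f ∧ ∀ x, f x ≠ x},
      ∑ g : Sym2 α → Bool,
        edgeWeight p g * (if survivors f.1 g = A then 1 else 0)) = Tsum p A := rfl
  have hden : (∑ f : {f : α → α // Function.Involutive f ∧ ∀ x, f x ≠ x},
      ∑ g : Sym2 α → Bool,
        edgeWeight p g * (if (survivors f.1 g).card = 2 * k then 1 else 0))
      = ∑ B ∈ (Finset.univ : Finset α).powersetCard (2 * k), Tsum p B := by
    have hpt : ∀ (f : α → α) (g : Sym2 α → Bool),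
        edgeWeight p g * (if (survivors f g).card = 2 * k then 1 else 0)
        = ∑ B ∈ (Finset.univ : Finset α).powersetCard (2 * k),
            edgeWeight p g * (if survivors f g = B then 1 else 0) := by
      intro f g
      rw [← Finset.mul_sum]
      congr 1
      rw [Finset.sum_ite_eq ((Finset.univ : Finset α).powersetCard (2 * k))
        (survivors f g) (fun _ : Finset α => (1:ℝ))]
      simp [Finset.mem_powersetCard_univ]
    unfold Tsum
    calc (∑ f : {f : α → α // Function.Involutive f ∧ ∀ x, f x ≠ x},
        ∑ g : Sym2 α → Bool,
          edgeWeight p g * (if (survivors f.1 g).card = 2 * k then 1 else 0))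
        = ∑ f : {f : α → α // Function.Involutive f ∧ ∀ x, f x ≠ x},
            ∑ g : Sym2 α → Bool,
              ∑ B ∈ (Finset.univ : Finset α).powersetCard (2 * k),
                edgeWeight p g * (if survivors f.1 g = B then 1 else 0) := by
          simp only [hpt]
      _ = ∑ f : {f : α → α // Function.Involutive f ∧ ∀ x, f x ≠ x},
            ∑ B ∈ (Finset.univ : Finset α).powersetCard (2 * k),
              ∑ g : Sym2 α → Bool,
                edgeWeight p g * (if survivors f.1 g = B then 1 else 0) :=
          Finset.sum_congr rfl fun f _ => Finset.sum_comm
      _ = ∑ B ∈ (Finset.univ : Finset α).powersetCard (2 * k),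
            ∑ f : {f : α → α // Function.Involutive f ∧ ∀ x, f x ≠ x},
              ∑ g : Sym2 α → Bool,
                edgeWeight p g * (if survivors f.1 g = B then 1 else 0) :=
          Finset.sum_comm
  have hBB : ∀ B ∈ (Finset.univ : Finset α).powersetCard (2 * k), Tsum p B = Tsum p A := by
    intro B hB
    rw [Finset.mem_powersetCard_univ] at hB
    obtain ⟨σ, hσ⟩ := exists_perm_image A B (by rw [hA, hB])
    rw [← hσ, Tsum_image]
  have hcardP : ((Finset.univ : Finset α).powersetCard (2 * k) : Finset (Finset α)).card
      = (2 * M).choose (2 * k) := by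
    rw [Finset.card_powersetCard, Finset.card_univ, hcard]
  rw [hnum, hden, Finset.sum_congr rfl hBB, Finset.sum_const, hcardP, nsmul_eq_mul]
  have hC : (0:ℝ) < ((2 * M).choose (2 * k) : ℝ) := by
    exact_mod_cast Nat.choose_pos (by omega)
  rw [div_mul_eq_div_div_swap, div_self (ne_of_gt hT)]
end

section
/- Let (λ_d)_{d≥0} be nonnegative reals with ∑_d λ_d = 1, ∑_d d(d−1)λ_d = L''(1) < ∞ and ∑_d d·λ_d = L'(1) > 0. For p ∈ (0,1), define λ_i^bond = ∑_{d≥i} λ_d·C(d,i)·p^i·(1−p)^{d−i}. Then ∑_{i≥1} i(i−2)·λ_i^bond = p·(p·L''(1) − L'(1)). In particular this sum is positive iff p > L'(1)/L''(1) and negative iff p < L'(1)/L''(1). -/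
/-- Binomially thinned degree distribution:
`λ_i^bond = ∑_{d ≥ i} λ_d · C(d,i) · p^i · (1−p)^{d−i}`. -/
noncomputable def lamBond (p : ℝ) (lam : ℕ → ℝ) (i : ℕ) : ℝ :=
  ∑' d : ℕ, if i ≤ d then lam d * (d.choose i) * p ^ i * (1 - p) ^ (d - i) else 0

/-- First binomial moment: `∑_{i=0}^{d} i·C(d,i)·p^i·(1−p)^{d−i} = d·p`. -/
lemma binom_moment1 (d : ℕ) (p : ℝ) :
    ∑ i ∈ Finset.range (d+1), (i:ℝ) * (d.choose i) * p^i * (1-p)^(d-i) = d * p := by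
  have h := congrArg (Polynomial.eval p) (bernsteinPolynomial.sum_smul ℝ d)
  simp only [Polynomial.eval_finset_sum, bernsteinPolynomial, Polynomial.eval_smul,
    Polynomial.eval_mul, Polynomial.eval_pow, Polynomial.eval_X, Polynomial.eval_sub,
    Polynomial.eval_one, Polynomial.eval_natCast, nsmul_eq_mul] at h
  convert h using 2 with i hi
  ring

/-- Second factorial binomial moment:
`∑_{i=0}^{d} i(i−1)·C(d,i)·p^i·(1−p)^{d−i} = d(d−1)·p²`. -/
lemma binom_moment2 (d : ℕ) (p : ℝ) :
    ∑ i ∈ Finset.range (d+1), ((i:ℝ) * ((i:ℝ)-1)) * (d.choose i) * p^i * (1-p)^(d-i)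
      = (d:ℝ) * ((d:ℝ)-1) * p^2 := by
  have h := congrArg (Polynomial.eval p) (bernsteinPolynomial.sum_mul_smul ℝ d)
  simp only [Polynomial.eval_finset_sum, bernsteinPolynomial, Polynomial.eval_smul,
    Polynomial.eval_mul, Polynomial.eval_pow, Polynomial.eval_X, Polynomial.eval_sub,
    Polynomial.eval_one, Polynomial.eval_natCast, nsmul_eq_mul] at h
  have cast_eq : ∀ i : ℕ, ((i * (i-1) : ℕ) : ℝ) = (i:ℝ) * ((i:ℝ)-1) := by
    rintro (_|i) <;> push_cast <;> ring
  rw [← cast_eq d, ← h]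
  refine Finset.sum_congr rfl fun i _ => ?_
  rw [cast_eq i]; ring

set_option maxHeartbeats 1000000 in
/-- Fubini-type lemma for nonnegative weights: if row sums are `c d`, then the weighted
sum of the thinned distribution has sum `∑ λ_d c_d`. -/
lemma hasSum_weighted (lam : ℕ → ℝ) (hnn : ∀ d, 0 ≤ lam d) (p : ℝ)
    (hp0 : 0 ≤ p) (hp1 : p ≤ 1) (w : ℕ → ℝ) (hw : ∀ i, 0 ≤ w i) (c : ℕ → ℝ)
    (hc : ∀ d : ℕ, ∑ i ∈ Finset.range (d+1),
        w i * ((d.choose i : ℝ) * p ^ i * (1-p) ^ (d-i)) = c d)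
    (M : ℝ) (hM : HasSum (fun d => lam d * c d) M) :
    HasSum (fun i => w i * lamBond p lam i) M := by
  set F : ℕ × ℕ → ℝ := fun q =>
    if q.2 ≤ q.1 then w q.2 * (lam q.1 * (q.1.choose q.2 : ℝ) * p ^ q.2 * (1-p) ^ (q.1 - q.2))
    else 0 with hF
  have hFnn : 0 ≤ F := by
    intro q
    simp only [hF]
    split
    · exact mul_nonneg (hw _) (mul_nonneg (mul_nonneg (mul_nonneg (hnn _) (by positivity))
        (pow_nonneg hp0 _)) (pow_nonneg (by linarith) _))
    · exact le_rfl
  have hrow_sum : ∀ d : ℕ, ∑' i : ℕ, F (d, i) = lam d * c d := by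
    intro d
    rw [tsum_eq_sum (s := Finset.range (d+1)) (by
      intro i hi
      simp only [hF]
      rw [if_neg]
      simpa using fun h => hi (Finset.mem_range.mpr (Nat.lt_succ_of_le h)))]
    rw [← hc d, Finset.mul_sum]
    refine Finset.sum_congr rfl fun i hi => ?_
    simp only [hF]
    rw [if_pos (Nat.lt_succ_iff.mp (Finset.mem_range.mp hi))]
    ring
  have hrow : ∀ d : ℕ, Summable fun i => F (d, i) := by
    intro d
    apply summable_of_ne_finset_zero (s := Finset.range (d+1))
    intro i hi
    simp only [hF]
    rw [if_neg]
    simpa using fun h => hi (Finset.mem_range.mpr (Nat.lt_succ_of_le h))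
  have hFsum : Summable F := by
    rw [summable_prod_of_nonneg hFnn]
    refine ⟨hrow, ?_⟩
    simp only [hrow_sum]
    exact hM.summable
  have hcol : ∀ i : ℕ, w i * lamBond p lam i = ∑' d : ℕ, F (d, i) := by
    intro i
    rw [lamBond, ← tsum_mul_left]
    refine tsum_congr fun d => ?_
    simp only [hF]
    split <;> ring
  have hswap : Summable (fun q : ℕ × ℕ => F (q.2, q.1)) :=
    (Equiv.prodComm ℕ ℕ).summable_iff.mpr hFsum
  have hcolsum : Summable (fun i : ℕ => ∑' d : ℕ, F (d, i)) :=
    ((summable_prod_of_nonneg (f := fun q : ℕ × ℕ => F (q.2, q.1))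
      (fun q => hFnn (q.2, q.1))).mp hswap).2
  have hcolsum' : Summable fun i => w i * lamBond p lam i := by
    simpa only [← hcol] using hcolsum
  rw [hcolsum'.hasSum_iff]
  calc ∑' i : ℕ, w i * lamBond p lam i = ∑' (i : ℕ) (d : ℕ), F (d, i) := tsum_congr hcol
    _ = ∑' (d : ℕ) (i : ℕ), F (d, i) := Summable.tsum_comm (f := fun d i => F (d, i)) hFsum
    _ = ∑' d : ℕ, lam d * c d := tsum_congr hrow_sum
    _ = M := hM.tsum_eq

/-- For a probability distribution `(λ_d)` with mean `L'(1) = L1 > 0` and second factorial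
moment `L''(1) = L2`, and `p ∈ (0,1)`:
`∑_{i≥1} i(i−2)·λ_i^bond = p·(p·L''(1) − L'(1))`; in particular the sum is positive iff
`p > L'(1)/L''(1)` and negative iff `p < L'(1)/L''(1)`. -/
theorem stmt5 (lam : ℕ → ℝ) (L1 L2 p : ℝ)
    (hnn : ∀ d, 0 ≤ lam d) (hsum : ∑' d, lam d = 1)
    (hL1 : HasSum (fun d : ℕ => (d : ℝ) * lam d) L1)
    (hL2 : HasSum (fun d : ℕ => (d : ℝ) * ((d : ℝ) - 1) * lam d) L2)
    (hL1pos : 0 < L1) (hL2pos : 0 < L2)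
    (hp : p ∈ Set.Ioo (0 : ℝ) 1) :
    (∑' i : ℕ, (i : ℝ) * ((i : ℝ) - 2) * lamBond p lam i) = p * (p * L2 - L1) ∧
    (0 < ∑' i : ℕ, (i : ℝ) * ((i : ℝ) - 2) * lamBond p lam i ↔ L1 / L2 < p) ∧
    ((∑' i : ℕ, (i : ℝ) * ((i : ℝ) - 2) * lamBond p lam i) < 0 ↔ p < L1 / L2) := by
  obtain ⟨hp0, hp1⟩ := hp
  -- first moment of the thinned distribution
  have S1 : HasSum (fun i : ℕ => (i : ℝ) * lamBond p lam i) (p * L1) := by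
    apply hasSum_weighted lam hnn p hp0.le hp1.le (fun i => (i : ℝ)) (fun i => by positivity)
      (fun d => (d : ℝ) * p)
    · intro d
      rw [← binom_moment1 d p]
      exact Finset.sum_congr rfl fun i _ => by ring
    · have := hL1.mul_left p
      convert this using 2 with d
      · rfl
      ring
  have S2 : HasSum (fun i : ℕ => (i : ℝ) * ((i : ℝ) - 1) * lamBond p lam i) (p^2 * L2) := by
    apply hasSum_weighted lam hnn p hp0.le hp1.le (fun i => (i : ℝ) * ((i : ℝ) - 1))
      (fun i => by
        rcases Nat.eq_zero_or_pos i with h | h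
        · simp [h]
        · have h1 : (1 : ℝ) ≤ (i : ℝ) := by exact_mod_cast h
          show 0 ≤ (i : ℝ) * ((i : ℝ) - 1)
          nlinarith)
      (fun d => (d : ℝ) * ((d : ℝ) - 1) * p^2)
    · intro d
      rw [← binom_moment2 d p]
      exact Finset.sum_congr rfl fun i _ => by ring
    · have := hL2.mul_left (p^2)
      convert this using 2 with d
      · rfl
      ring
  have key : HasSum (fun i : ℕ => (i : ℝ) * ((i : ℝ) - 2) * lamBond p lam i)
      (p * (p * L2 - L1)) := by
    have hfe : (fun i : ℕ => (i : ℝ) * ((i : ℝ) - 2) * lamBond p lam i)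
        = fun i : ℕ => (i : ℝ) * ((i : ℝ) - 1) * lamBond p lam i - (i : ℝ) * lamBond p lam i :=
      funext fun i => by ring
    have hval : p * (p * L2 - L1) = p ^ 2 * L2 - p * L1 := by ring
    rw [hfe, hval]
    exact S2.sub S1
  have hEq := key.tsum_eq
  refine ⟨hEq, ?_, ?_⟩
  · rw [hEq]
    constructor
    · intro h
      have h2 : 0 < p * L2 - L1 := by
        by_contra hc
        push_neg at hc
        nlinarith
      rw [div_lt_iff₀ hL2pos]
      linarith
    · intro h
      rw [div_lt_iff₀ hL2pos] at h
      have : 0 < p * L2 - L1 := by linarith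
      positivity
  · rw [hEq]
    constructor
    · intro h
      have h2 : p * L2 - L1 < 0 := by
        by_contra hc
        push_neg at hc
        nlinarith
      rw [lt_div_iff₀ hL2pos]
      linarith
    · intro h
      rw [lt_div_iff₀ hL2pos] at h
      nlinarith
end

section
/- For 0 ≤ i ≤ d ≤ Δ and k with d ≤ 2k ≤ 2M − d, the hypergeometric probability C(d,i)·C(2M−d, 2k−i)/C(2M,2k) equals C(d,i)·(2k)^i·(2M−2k)^{d−i}/(2M)^d · (1 + O(Δ²/M)) ; in particular if k = Mp(1+O(n^{−1/3})) and Δ ≤ n^{1/9}, M = Θ(n), it equals C(d,i)·p^i·(1−p)^{d−i}·(1 + O(log n / n^{7/18})). -/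
/-- Hypergeometric probability that a fixed vertex of degree `d` has `i` of its points
among a uniformly chosen `2k`-subset of `2M` points. -/
noncomputable def hyperProb (M k d i : ℕ) : ℝ :=
  ((d.choose i : ℝ) * ((2 * M - d).choose (2 * k - i) : ℝ)) / ((2 * M).choose (2 * k) : ℝ)

open Real Filter Asymptotics

private lemma cast_descFactorial {n t : ℕ} (h : t ≤ n) :
    (n.descFactorial t : ℝ) = (n.factorial : ℝ) / ((n - t).factorial : ℝ) := by
  rw [eq_div_iff (by exact_mod_cast (Nat.factorial_pos _).ne')]
  exact_mod_cast (mul_comm ((n - t).factorial) (n.descFactorial t)) ▸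
    Nat.factorial_mul_descFactorial h

private lemma desc_ub (m t : ℕ) : (m.descFactorial t : ℝ) ≤ (m : ℝ) ^ t := by
  exact_mod_cast Nat.descFactorial_le_pow m t

private lemma desc_lb {m t : ℕ} (ht : t ≤ m) :
    ((m : ℝ) - t) ^ t ≤ (m.descFactorial t : ℝ) := by
  have h2 : ((m + 1 - t : ℕ) : ℝ) ^ t ≤ (m.descFactorial t : ℝ) := by
    exact_mod_cast Nat.pow_sub_le_descFactorial m t
  refine le_trans (pow_le_pow_left₀ (by simp only [sub_nonneg]; exact_mod_cast ht) ?_ t) h2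
  push_cast [Nat.cast_sub (by omega : t ≤ m + 1)]
  linarith

private lemma pair_bound {a b : ℝ} (ha0 : 0 ≤ a) (ha1 : a ≤ 1) (hb0 : 0 ≤ b) (hb1 : b ≤ 1)
    (m n : ℕ) : 1 - m * a - n * b ≤ (1 - a) ^ m * (1 - b) ^ n := by
  have h1 : 1 - (m : ℝ) * a ≤ (1 - a) ^ m := by
    have := one_add_mul_le_pow (show (-2 : ℝ) ≤ -a by linarith) m
    simpa [sub_eq_add_neg, mul_neg] using this
  have h2 : 1 - (n : ℝ) * b ≤ (1 - b) ^ n := by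
    have := one_add_mul_le_pow (show (-2 : ℝ) ≤ -b by linarith) n
    simpa [sub_eq_add_neg, mul_neg] using this
  have h3 : (1 - a) ^ m ≤ 1 := pow_le_one₀ (by linarith) (by linarith)
  have h4 : (1 - b) ^ n ≤ 1 := pow_le_one₀ (by linarith) (by linarith)
  nlinarith [mul_nonneg (sub_nonneg.2 h3) (sub_nonneg.2 h4)]

private lemma hyper_eq (M k d i : ℕ) (hi : i ≤ d) (hdk : d ≤ 2 * k)
    (hkM : d + 2 * k ≤ 2 * M) :
    hyperProb M k d i = (d.choose i : ℝ) * ((2 * k).descFactorial i : ℝ)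
      * ((2 * M - 2 * k).descFactorial (d - i) : ℝ) / ((2 * M).descFactorial d : ℝ) := by
  have h1 : 2 * k - i ≤ 2 * M - d := by omega
  have h2 : 2 * k ≤ 2 * M := by omega
  have h3 : i ≤ 2 * k := hi.trans hdk
  have h4 : d - i ≤ 2 * M - 2 * k := by omega
  have h5 : d ≤ 2 * M := by omega
  have hE : (2 * M - d) - (2 * k - i) = (2 * M - 2 * k) - (d - i) := by omega
  unfold hyperProb
  rw [Nat.cast_choose ℝ h1, Nat.cast_choose ℝ h2, cast_descFactorial h3,
    cast_descFactorial h4, cast_descFactorial h5, hE]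
  field_simp

private lemma log_le_eventually {r ε : ℝ} (hr : 0 < r) (hε : 0 < ε) :
    ∀ᶠ x : ℝ in atTop, Real.log x ≤ ε * x ^ r := by
  have h := (isLittleO_log_rpow_atTop hr).bound hε
  filter_upwards [h, eventually_ge_atTop (1 : ℝ)] with x hx hx1
  have hx0 : (0 : ℝ) ≤ x := by linarith
  have h' : |Real.log x| ≤ ε * |x ^ r| := by simpa [Real.norm_eq_abs] using hx
  calc Real.log x ≤ |Real.log x| := le_abs_self _
    _ ≤ ε * |x ^ r| := h'
    _ = ε * x ^ r := by rw [abs_of_nonneg (Real.rpow_nonneg hx0 r)]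

set_option maxHeartbeats 4000000 in
/-- The hypergeometric estimate: for `0 ≤ i ≤ d ≤ Δ` and `d ≤ 2k ≤ 2M − d`, in the regime
`M = Θ(n)`, `Δ ≤ n^{1/9}` and `k = Mp ± O(√n·log n)`, the probability
`C(d,i)·C(2M−d,2k−i)/C(2M,2k)` equals
`C(d,i)·(2k)^i·(2M−2k)^{d−i}/(2M)^d·(1 + O(Δ²/M))`, and in particular equals
`C(d,i)·p^i·(1−p)^{d−i}·(1 + O(log n / n^{7/18}))`, uniformly. -/
theorem stmt16 (p c1 c2 A : ℝ) (hp : p ∈ Set.Ioo (0 : ℝ) 1)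
    (hc1 : 0 < c1) (hc12 : c1 ≤ c2) (hA : 0 < A) :
    ∃ C > (0 : ℝ), ∃ N : ℕ, ∀ n ≥ N, ∀ M Δ d i k : ℕ,
      c1 * (n : ℝ) ≤ (M : ℝ) → (M : ℝ) ≤ c2 * (n : ℝ) →
      (Δ : ℝ) ≤ (n : ℝ) ^ ((1 : ℝ) / 9) →
      i ≤ d → d ≤ Δ → d ≤ 2 * k → 2 * k ≤ 2 * M - d →
      |(k : ℝ) - p * (M : ℝ)| ≤ A * Real.sqrt n * Real.log n →
      (|hyperProb M k d i -
          (d.choose i : ℝ) * (2 * k : ℝ) ^ i * (2 * M - 2 * k : ℝ) ^ (d - i)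
            / (2 * M : ℝ) ^ d|
        ≤ C * ((Δ : ℝ) ^ 2 / (M : ℝ)) *
          ((d.choose i : ℝ) * (2 * k : ℝ) ^ i * (2 * M - 2 * k : ℝ) ^ (d - i)
            / (2 * M : ℝ) ^ d)) ∧
      (|hyperProb M k d i - (d.choose i : ℝ) * p ^ i * (1 - p) ^ (d - i)|
        ≤ C * (Real.log n / (n : ℝ) ^ ((7 : ℝ) / 18)) *
          ((d.choose i : ℝ) * p ^ i * (1 - p) ^ (d - i))) := by
  obtain ⟨hp0, hp1⟩ := hp
  obtain ⟨q, hq_def⟩ : ∃ q : ℝ, q = min p (1 - p) := ⟨_, rfl⟩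
  have hq0 : 0 < q := hq_def ▸ lt_min hp0 (by linarith)
  have hqp : q ≤ p := hq_def ▸ min_le_left _ _
  have hq1p : q ≤ 1 - p := hq_def ▸ min_le_right _ _
  obtain ⟨K1, hK1_def⟩ : ∃ K1 : ℝ, K1 = 1 + 2 / q := ⟨_, rfl⟩
  have hq2 : 0 < 2 / q := by positivity
  have hK1_1 : 1 ≤ K1 := by rw [hK1_def]; linarith
  have hK1_q : 2 / q ≤ K1 := by rw [hK1_def]; linarith
  have hK10 : 0 < K1 := by linarith
  obtain ⟨K2, hK2_def⟩ : ∃ K2 : ℝ, K2 = 2 * K1 / c1 + 4 * A / (c1 * q) := ⟨_, rfl⟩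
  have hK20 : 0 < K2 := by rw [hK2_def]; positivity
  refine ⟨K1 + K2, by positivity, ?_⟩
  -- the eventual conditions
  have e2 : ∀ᶠ x : ℝ in atTop, x ^ ((2 : ℝ) / 9) ≤ c1 * x := by
    have h := (tendsto_rpow_atTop (show (0 : ℝ) < 7 / 9 by norm_num)).eventually_ge_atTop (1 / c1)
    filter_upwards [h, eventually_ge_atTop (1 : ℝ)] with x hx hx1
    have hx0 : (0 : ℝ) < x := by linarith
    have hid : x = x ^ ((2 : ℝ) / 9) * x ^ ((7 : ℝ) / 9) := by
      rw [← Real.rpow_add hx0]; norm_num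
    have h29 : (0 : ℝ) ≤ x ^ ((2 : ℝ) / 9) := Real.rpow_nonneg hx0.le _
    have h1 : 1 ≤ c1 * x ^ ((7 : ℝ) / 9) := by
      rw [div_le_iff₀ hc1] at hx; nlinarith
    nlinarith [mul_le_mul_of_nonneg_left h1 h29]
  have e3 : ∀ᶠ x : ℝ in atTop, 2 * A * Real.sqrt x * Real.log x ≤ q * c1 * x := by
    filter_upwards [log_le_eventually (show (0:ℝ) < 1/2 by norm_num)
      (show (0:ℝ) < q * c1 / (2 * A) by positivity), eventually_ge_atTop (0 : ℝ)] with x hx hx0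
    have hs : Real.sqrt x = x ^ ((1 : ℝ) / 2) := Real.sqrt_eq_rpow x
    have hss : Real.sqrt x * Real.sqrt x = x := Real.mul_self_sqrt hx0
    have hs0 : 0 ≤ Real.sqrt x := Real.sqrt_nonneg x
    rw [← hs] at hx
    have := mul_le_mul_of_nonneg_left hx (by positivity : (0:ℝ) ≤ 2 * A * Real.sqrt x)
    calc 2 * A * Real.sqrt x * Real.log x ≤
        2 * A * Real.sqrt x * (q * c1 / (2 * A) * Real.sqrt x) := this
      _ = q * c1 * x := by field_simp; linear_combination hss
  have e4 : ∀ᶠ x : ℝ in atTop, 2 * A / (c1 * q) * Real.log x ≤ 1 / 2 * x ^ ((7 : ℝ) / 18) := by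
    filter_upwards [log_le_eventually (show (0:ℝ) < 7/18 by norm_num)
      (show (0:ℝ) < c1 * q / (4 * A) by positivity)] with x hx
    have h0 : (0:ℝ) < 2 * A / (c1 * q) := by positivity
    have := mul_le_mul_of_nonneg_left hx h0.le
    calc 2 * A / (c1 * q) * Real.log x ≤
        2 * A / (c1 * q) * (c1 * q / (4 * A) * x ^ ((7 : ℝ) / 18)) := this
      _ = 1 / 2 * x ^ ((7 : ℝ) / 18) := by field_simp; ring
  have e5 : ∀ᶠ x : ℝ in atTop, A / (c1 * q) * Real.log x ≤ 1 / 2 * Real.sqrt x := by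
    filter_upwards [log_le_eventually (show (0:ℝ) < 1/2 by norm_num)
      (show (0:ℝ) < c1 * q / (2 * A) by positivity), eventually_ge_atTop (0 : ℝ)] with x hx hx0
    have hs : Real.sqrt x = x ^ ((1 : ℝ) / 2) := Real.sqrt_eq_rpow x
    rw [← hs] at hx
    have h0 : (0:ℝ) < A / (c1 * q) := by positivity
    have := mul_le_mul_of_nonneg_left hx h0.le
    calc A / (c1 * q) * Real.log x ≤
        A / (c1 * q) * (c1 * q / (2 * A) * Real.sqrt x) := this
      _ = 1 / 2 * Real.sqrt x := by field_simp
  have hev : ∀ᶠ n : ℕ in atTop, (3 : ℕ) ≤ n ∧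
      ((n : ℝ) ^ ((2 : ℝ) / 9) ≤ c1 * n ∧
        2 * A * Real.sqrt n * Real.log n ≤ q * c1 * n ∧
        2 * A / (c1 * q) * Real.log n ≤ 1 / 2 * (n : ℝ) ^ ((7 : ℝ) / 18) ∧
        A / (c1 * q) * Real.log n ≤ 1 / 2 * Real.sqrt n) := by
    exact (eventually_ge_atTop 3).and
      (tendsto_natCast_atTop_atTop.eventually (e2.and (e3.and (e4.and e5))))
  rw [eventually_atTop] at hev
  obtain ⟨N, hN⟩ := hev
  refine ⟨N, ?_⟩
  intro n hn M Δ d i k hM1 hM2 hΔn hid hdΔ hd2k h2kM hkp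
  obtain ⟨hn3, he2, he3, he4, he5⟩ := hN n hn
  -- basic facts
  have hn0R : (0 : ℝ) < n := by exact_mod_cast Nat.lt_of_lt_of_le (by norm_num) hn3
  have hn1R : (1 : ℝ) ≤ n := by exact_mod_cast Nat.le_of_lt (Nat.lt_of_lt_of_le (by norm_num) hn3)
  have hn3R : (3 : ℝ) ≤ n := by exact_mod_cast hn3
  have hlog1 : 1 ≤ Real.log n := by
    have he : Real.exp 1 ≤ 3 := by
      have := Real.exp_one_lt_d9
      linarith
    calc (1 : ℝ) = Real.log (Real.exp 1) := (Real.log_exp 1).symm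
      _ ≤ Real.log n := Real.log_le_log (Real.exp_pos 1) (by linarith)
  have hM0R : (0 : ℝ) < M := lt_of_lt_of_le (by positivity) hM1
  have hM0 : 0 < M := by exact_mod_cast hM0R
  have hd2M : d + 2 * k ≤ 2 * M := by omega
  have hk2 : 2 * k ≤ 2 * M := by omega
  have hi2k : i ≤ 2 * k := hid.trans hd2k
  have hdi2 : d - i ≤ 2 * M - 2 * k := by omega
  have hd2M' : d ≤ 2 * M := by omega
  have hcast2Mk : ((2 * M - 2 * k : ℕ) : ℝ) = 2 * (M : ℝ) - 2 * (k : ℝ) := by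
    rw [Nat.cast_sub hk2]; push_cast; ring
  have hcastdi : ((d - i : ℕ) : ℝ) = (d : ℝ) - (i : ℝ) := by
    rw [Nat.cast_sub hid]
  have hdΔR : (d : ℝ) ≤ (Δ : ℝ) := by exact_mod_cast hdΔ
  have hΔ0 : (0 : ℝ) ≤ (Δ : ℝ) := Nat.cast_nonneg Δ
  have hd0 : (0 : ℝ) ≤ (d : ℝ) := Nat.cast_nonneg d
  have hΔsq : (Δ : ℝ) ^ 2 ≤ (n : ℝ) ^ ((2 : ℝ) / 9) := by
    have h1 : (Δ : ℝ) ^ 2 ≤ ((n : ℝ) ^ ((1 : ℝ) / 9)) ^ 2 := by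
      exact pow_le_pow_left₀ hΔ0 hΔn 2
    have h2 : ((n : ℝ) ^ ((1 : ℝ) / 9)) ^ 2 = (n : ℝ) ^ ((2 : ℝ) / 9) := by
      rw [← Real.rpow_natCast ((n : ℝ) ^ ((1 : ℝ) / 9)) 2, ← Real.rpow_mul hn0R.le]
      norm_num
    linarith
  have hΔ2c : (Δ : ℝ) ^ 2 ≤ c1 * n := le_trans hΔsq he2
  have hd2M_le : (d : ℝ) ^ 2 ≤ (M : ℝ) := by
    have : (d : ℝ) ^ 2 ≤ (Δ : ℝ) ^ 2 := pow_le_pow_left₀ hd0 hdΔR 2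
    linarith
  have hdM_le : (d : ℝ) ≤ (M : ℝ) := by
    have : (d : ℕ) ≤ d ^ 2 := Nat.le_self_pow two_ne_zero d
    have h' : (d : ℝ) ≤ (d : ℝ) ^ 2 := by exact_mod_cast this
    linarith
  -- location of 2k
  have hlog0 : (0 : ℝ) ≤ Real.log n := by linarith
  have hB0 : (0 : ℝ) ≤ A * Real.sqrt n * Real.log n := by positivity
  have habs := abs_le.1 hkp
  have hqc1p : q * c1 * (n : ℝ) ≤ p * M := by
    have h1 : q * (c1 * n) ≤ p * (c1 * n) :=
      mul_le_mul_of_nonneg_right hqp (by positivity)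
    have h2 : p * (c1 * n) ≤ p * M := mul_le_mul_of_nonneg_left hM1 hp0.le
    linarith only [h1, h2]
  have hqc1p' : q * c1 * (n : ℝ) ≤ (1 - p) * M := by
    have h1 : q * (c1 * n) ≤ (1 - p) * (c1 * n) :=
      mul_le_mul_of_nonneg_right hq1p (by positivity)
    have h2 : (1 - p) * (c1 * n) ≤ (1 - p) * M :=
      mul_le_mul_of_nonneg_left hM1 (by linarith)
    linarith only [h1, h2]
  have hkl : p * (M : ℝ) ≤ 2 * k := by linarith only [habs.1, he3, hqc1p]
  have hku : (1 - p) * (M : ℝ) ≤ 2 * (M : ℝ) - 2 * k := by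
    linarith only [habs.2, he3, hqc1p']
  have hqM2k : q * (M : ℝ) ≤ 2 * (k : ℝ) := by
    have h1 : q * M ≤ p * M := mul_le_mul_of_nonneg_right hqp hM0R.le
    linarith only [h1, hkl]
  have hqM2k' : q * (M : ℝ) ≤ 2 * (M : ℝ) - 2 * (k : ℝ) := by
    have h1 : q * M ≤ (1 - p) * M := mul_le_mul_of_nonneg_right hq1p hM0R.le
    linarith only [h1, hku]
  have hqM0 : (0 : ℝ) < q * M := by positivity
  have h2k0 : (0 : ℝ) < 2 * (k : ℝ) := lt_of_lt_of_le hqM0 hqM2k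
  have h2Mk0 : (0 : ℝ) < 2 * (M : ℝ) - 2 * (k : ℝ) := lt_of_lt_of_le hqM0 hqM2k'
  have h2M0 : (0 : ℝ) < 2 * (M : ℝ) := by linarith
  -- names for the main quantities
  have hccR : (0 : ℝ) < (d.choose i : ℝ) := by exact_mod_cast Nat.choose_pos hid
  obtain ⟨cc, hcc_def⟩ : ∃ x : ℝ, x = (d.choose i : ℝ) := ⟨_, rfl⟩
  obtain ⟨T, hT_def⟩ : ∃ x : ℝ,
    x = (2 * (k : ℝ)) ^ i * (2 * (M : ℝ) - 2 * (k : ℝ)) ^ (d - i) := ⟨_, rfl⟩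
  obtain ⟨P, hP_def⟩ : ∃ x : ℝ, x = (2 * (M : ℝ)) ^ d := ⟨_, rfl⟩
  obtain ⟨tgt, htgt_def⟩ : ∃ x : ℝ, x = (d.choose i : ℝ) * (2 * (k : ℝ)) ^ i *
    (2 * (M : ℝ) - 2 * (k : ℝ)) ^ (d - i) / (2 * (M : ℝ)) ^ d := ⟨_, rfl⟩
  obtain ⟨S, hS_def⟩ : ∃ x : ℝ, x = (d.choose i : ℝ) * p ^ i * (1 - p) ^ (d - i) := ⟨_, rfl⟩
  have hcc0 : (0 : ℝ) < cc := hcc_def ▸ hccR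
  have hP0 : (0 : ℝ) < P := by rw [hP_def]; positivity
  have hT0 : (0 : ℝ) < T := by
    rw [hT_def]; exact mul_pos (pow_pos h2k0 i) (pow_pos h2Mk0 (d - i))
  have htgt0 : 0 < tgt := by
    rw [htgt_def]
    exact div_pos (mul_pos (mul_pos hccR (pow_pos h2k0 i)) (pow_pos h2Mk0 (d - i))) (by positivity)
  have hS0 : 0 < S := by
    rw [hS_def]
    exact mul_pos (mul_pos hccR (pow_pos hp0 i)) (pow_pos (by linarith) (d - i))
  have htgtT : tgt = cc * T / P := by rw [htgt_def, hcc_def, hT_def, hP_def]; ring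
  -- the exact identity
  obtain ⟨Du, hDu_def⟩ : ∃ x : ℝ, x = ((2 * M).descFactorial d : ℝ) := ⟨_, rfl⟩
  obtain ⟨N1, hN1_def⟩ : ∃ x : ℝ, x = ((2 * k).descFactorial i : ℝ) := ⟨_, rfl⟩
  obtain ⟨N2, hN2_def⟩ : ∃ x : ℝ, x = ((2 * M - 2 * k).descFactorial (d - i) : ℝ) := ⟨_, rfl⟩
  have hhyp : hyperProb M k d i = cc * N1 * N2 / Du := by
    rw [hcc_def, hN1_def, hN2_def, hDu_def]; exact hyper_eq M k d i hid hd2k hd2M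
  -- bounds on Du
  have hD_ub : Du ≤ P := by
    rw [hDu_def, hP_def]
    calc ((2 * M).descFactorial d : ℝ) ≤ ((2 * M : ℕ) : ℝ) ^ d := desc_ub _ _
      _ = (2 * (M : ℝ)) ^ d := by push_cast; ring
  have hD_lb1 : (2 * (M : ℝ) - d) ^ d ≤ Du := by
    rw [hDu_def]
    have := desc_lb hd2M'
    calc (2 * (M : ℝ) - d) ^ d = (((2 * M : ℕ) : ℝ) - d) ^ d := by push_cast; ring_nf
      _ ≤ _ := this
  have hfrac2 : (d : ℝ) ^ 2 / (2 * M) ≤ 1 / 2 := by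
    rw [div_le_iff₀ h2M0]; linarith
  have hfrac1 : (d : ℝ) / (2 * M) ≤ 1 := by
    rw [div_le_iff₀ h2M0]; linarith
  have hfrac0 : 0 ≤ (d : ℝ) / (2 * M) := by positivity
  have hber : 1 - (d : ℝ) ^ 2 / (2 * M) ≤ (1 - (d : ℝ) / (2 * M)) ^ d := by
    calc 1 - (d : ℝ) ^ 2 / (2 * M) = 1 + (d : ℝ) * -((d : ℝ) / (2 * M)) := by
          field_simp; ring
      _ ≤ (1 + -((d : ℝ) / (2 * M))) ^ d := one_add_mul_le_pow (by linarith) d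
      _ = (1 - (d : ℝ) / (2 * M)) ^ d := by rw [← sub_eq_add_neg]
  have hmul_pow : P * (1 - (d : ℝ) / (2 * M)) ^ d = (2 * (M : ℝ) - d) ^ d := by
    rw [hP_def, ← mul_pow]; congr 1; field_simp
  have hD_lb : P * (1 - (d : ℝ) ^ 2 / (2 * M)) ≤ Du := by
    calc P * (1 - (d : ℝ) ^ 2 / (2 * M)) ≤ P * (1 - (d : ℝ) / (2 * M)) ^ d :=
          mul_le_mul_of_nonneg_left hber hP0.le
      _ = (2 * (M : ℝ) - d) ^ d := hmul_pow
      _ ≤ Du := hD_lb1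
  have hD0 : (0 : ℝ) < Du := by
    have h1 : (0 : ℝ) < P * (1 / 2) := by positivity
    have h2 : P * (1 / 2) ≤ P * (1 - (d : ℝ) ^ 2 / (2 * M)) :=
      mul_le_mul_of_nonneg_left (by linarith only [hfrac2]) hP0.le
    linarith only [h1, h2, hD_lb]
  -- upper bounds on N1 N2
  have hN1_ub : N1 ≤ (2 * (k : ℝ)) ^ i := by
    rw [hN1_def]
    calc ((2 * k).descFactorial i : ℝ) ≤ ((2 * k : ℕ) : ℝ) ^ i := desc_ub _ _
      _ = (2 * (k : ℝ)) ^ i := by push_cast; ring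
  have hN2_ub : N2 ≤ (2 * (M : ℝ) - 2 * (k : ℝ)) ^ (d - i) := by
    rw [hN2_def]
    calc ((2 * M - 2 * k).descFactorial (d - i) : ℝ)
        ≤ ((2 * M - 2 * k : ℕ) : ℝ) ^ (d - i) := desc_ub _ _
      _ = (2 * (M : ℝ) - 2 * (k : ℝ)) ^ (d - i) := by rw [hcast2Mk]
  have hN1_0 : (0 : ℝ) ≤ N1 := by rw [hN1_def]; exact Nat.cast_nonneg _
  have hN2_0 : (0 : ℝ) ≤ N2 := by rw [hN2_def]; exact Nat.cast_nonneg _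
  have hN12_ub : N1 * N2 ≤ T := by
    rw [hT_def]
    exact mul_le_mul hN1_ub hN2_ub hN2_0 (by positivity)
  -- lower bounds on N1 N2 via pair_bound
  obtain ⟨a, ha_def⟩ : ∃ a : ℝ, a = (i : ℝ) / (2 * k) := ⟨_, rfl⟩
  obtain ⟨b, hb_def⟩ : ∃ b : ℝ, b = ((d : ℝ) - i) / (2 * (M : ℝ) - 2 * k) := ⟨_, rfl⟩
  have hiR2k : (i : ℝ) ≤ 2 * k := by exact_mod_cast hi2k
  have hdiR : (d : ℝ) - i ≤ 2 * (M : ℝ) - 2 * k := by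
    have : ((d - i : ℕ) : ℝ) ≤ ((2 * M - 2 * k : ℕ) : ℝ) := by exact_mod_cast hdi2
    rw [hcastdi, hcast2Mk] at this; linarith
  have hdiR0 : (0 : ℝ) ≤ (d : ℝ) - i := by
    have : (i : ℝ) ≤ d := by exact_mod_cast hid
    linarith
  have ha0 : 0 ≤ a := by rw [ha_def]; positivity
  have ha1 : a ≤ 1 := by rw [ha_def, div_le_one h2k0]; exact hiR2k
  have hb0 : 0 ≤ b := by rw [hb_def]; exact div_nonneg hdiR0 h2Mk0.le
  have hb1 : b ≤ 1 := by rw [hb_def, div_le_one h2Mk0]; exact hdiR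
  have hN1_lb : (2 * (k : ℝ)) ^ i * (1 - a) ^ i ≤ N1 := by
    have heq : 2 * (k : ℝ) * (1 - a) = 2 * (k : ℝ) - i := by
      rw [ha_def]; field_simp [(by linarith : (0:ℝ) < k).ne']
    rw [← mul_pow, heq, hN1_def]
    calc (2 * (k : ℝ) - i) ^ i = (((2 * k : ℕ) : ℝ) - i) ^ i := by push_cast; ring_nf
      _ ≤ _ := desc_lb hi2k
  have hN2_lb : (2 * (M : ℝ) - 2 * (k : ℝ)) ^ (d - i) * (1 - b) ^ (d - i) ≤ N2 := by
    have heq : (2 * (M : ℝ) - 2 * (k : ℝ)) * (1 - b) = (2 * (M : ℝ) - 2 * k) - ((d : ℝ) - i) := by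
      rw [hb_def]; field_simp [(by linarith : (0:ℝ) < (M:ℝ) - k).ne']
    rw [← mul_pow, heq, hN2_def]
    calc (2 * (M : ℝ) - 2 * k - ((d : ℝ) - i)) ^ (d - i)
        = (((2 * M - 2 * k : ℕ) : ℝ) - ((d - i : ℕ) : ℝ)) ^ (d - i) := by
          rw [hcast2Mk, hcastdi]
      _ ≤ _ := desc_lb hdi2
  have hpair := pair_bound ha0 ha1 hb0 hb1 i (d - i)
  have hN12_lb : T * (1 - (i : ℝ) * a - ((d - i : ℕ) : ℝ) * b) ≤ N1 * N2 := by
    calc T * (1 - (i : ℝ) * a - ((d - i : ℕ) : ℝ) * b)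
        ≤ T * ((1 - a) ^ i * (1 - b) ^ (d - i)) := mul_le_mul_of_nonneg_left hpair hT0.le
      _ = ((2 * (k : ℝ)) ^ i * (1 - a) ^ i) *
          ((2 * (M : ℝ) - 2 * (k : ℝ)) ^ (d - i) * (1 - b) ^ (d - i)) := by
          rw [hT_def]; ring
      _ ≤ N1 * N2 := by
          refine mul_le_mul hN1_lb hN2_lb
            (mul_nonneg (pow_nonneg h2Mk0.le _) (pow_nonneg (by linarith) _)) hN1_0
  have hiRd : (i : ℝ) ≤ d := by exact_mod_cast hid
  have hia : (i : ℝ) * a ≤ (d : ℝ) ^ 2 / (q * M) := by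
    rw [ha_def, show (i : ℝ) * ((i : ℝ) / (2 * (k : ℝ))) = (i : ℝ) ^ 2 / (2 * (k : ℝ)) from
      by ring, div_le_div_iff₀ h2k0 hqM0]
    have h1 : (i : ℝ) ^ 2 ≤ (d : ℝ) ^ 2 := pow_le_pow_left₀ (Nat.cast_nonneg i) hiRd 2
    have h2 : (i : ℝ) ^ 2 * (q * M) ≤ (d : ℝ) ^ 2 * (q * M) :=
      mul_le_mul_of_nonneg_right h1 hqM0.le
    have h3 : (d : ℝ) ^ 2 * (q * M) ≤ (d : ℝ) ^ 2 * (2 * k) :=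
      mul_le_mul_of_nonneg_left hqM2k (sq_nonneg _)
    linarith only [h2, h3]
  have hib : ((d - i : ℕ) : ℝ) * b ≤ (d : ℝ) ^ 2 / (q * M) := by
    rw [hcastdi, hb_def, show ((d : ℝ) - i) * (((d : ℝ) - i) / (2 * (M : ℝ) - 2 * k)) =
      ((d : ℝ) - i) ^ 2 / (2 * (M : ℝ) - 2 * k) from by ring,
      div_le_div_iff₀ h2Mk0 hqM0]
    have h1 : ((d : ℝ) - i) ^ 2 ≤ (d : ℝ) ^ 2 :=
      pow_le_pow_left₀ hdiR0 (by linarith [Nat.cast_nonneg (α := ℝ) i]) 2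
    have h2 : ((d : ℝ) - i) ^ 2 * (q * M) ≤ (d : ℝ) ^ 2 * (q * M) :=
      mul_le_mul_of_nonneg_right h1 hqM0.le
    have h3 : (d : ℝ) ^ 2 * (q * M) ≤ (d : ℝ) ^ 2 * (2 * (M : ℝ) - 2 * k) :=
      mul_le_mul_of_nonneg_left hqM2k' (sq_nonneg _)
    linarith only [h2, h3]
  -- first estimate: upper bound
  have hx1 : (0 : ℝ) ≤ (d : ℝ) ^ 2 / M := by positivity
  have hx2 : (d : ℝ) ^ 2 / M ≤ 1 := by rw [div_le_one hM0R]; exact hd2M_le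
  have hx3 : (d : ℝ) ^ 2 / (2 * M) = ((d : ℝ) ^ 2 / M) / 2 := by ring
  have hupper : hyperProb M k d i ≤ tgt * (1 + (d : ℝ) ^ 2 / M) := by
    rw [hhyp, htgtT]
    rw [div_mul_eq_mul_div, div_le_div_iff₀ hD0 hP0]
    have hPle : P ≤ (1 + (d : ℝ) ^ 2 / M) * Du := by
      have h1 : P * (1 - ((d : ℝ) ^ 2 / M) / 2) ≤ Du := by rw [← hx3]; exact hD_lb
      have h4 : (1 + (d : ℝ) ^ 2 / M) * (P * (1 - ((d : ℝ) ^ 2 / M) / 2)) ≤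
          (1 + (d : ℝ) ^ 2 / M) * Du := mul_le_mul_of_nonneg_left h1 (by linarith only [hx1])
      have h5 : 0 ≤ P * ((d : ℝ) ^ 2 / M) * (1 - (d : ℝ) ^ 2 / M) :=
        mul_nonneg (mul_nonneg hP0.le hx1) (by linarith only [hx2])
      nlinarith only [h4, h5]
    have h2 : N1 * N2 * P ≤ T * ((1 + (d : ℝ) ^ 2 / M) * Du) :=
      mul_le_mul hN12_ub hPle hP0.le hT0.le
    calc cc * N1 * N2 * P = cc * (N1 * N2 * P) := by ring
      _ ≤ cc * (T * ((1 + (d : ℝ) ^ 2 / M) * Du)) :=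
          mul_le_mul_of_nonneg_left h2 hcc0.le
      _ = cc * T * (1 + (d : ℝ) ^ 2 / M) * Du := by ring
  -- first estimate: lower bound
  have hyb : 1 - 2 / q * ((d : ℝ) ^ 2 / M) ≤ 1 - (i : ℝ) * a - ((d - i : ℕ) : ℝ) * b := by
    have : 2 / q * ((d : ℝ) ^ 2 / M) = (d : ℝ) ^ 2 / (q * M) + (d : ℝ) ^ 2 / (q * M) := by
      field_simp; ring
    linarith only [hia, hib, this]
  have hlower : tgt * (1 - 2 / q * ((d : ℝ) ^ 2 / M)) ≤ hyperProb M k d i := by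
    rcases le_or_gt (1 - 2 / q * ((d : ℝ) ^ 2 / M)) 0 with hc | hc
    · have h1 : tgt * (1 - 2 / q * ((d : ℝ) ^ 2 / M)) ≤ 0 := mul_nonpos_of_nonneg_of_nonpos htgt0.le hc
      have h2 : 0 ≤ hyperProb M k d i := by
        rw [hhyp]
        exact div_nonneg (mul_nonneg (mul_nonneg hcc0.le hN1_0) hN2_0) hD0.le
      linarith only [h1, h2]
    · rw [hhyp, htgtT]
      rw [div_mul_eq_mul_div, div_le_div_iff₀ hP0 hD0]
      have hTb : T * (1 - 2 / q * ((d : ℝ) ^ 2 / M)) ≤ N1 * N2 := by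
        calc T * (1 - 2 / q * ((d : ℝ) ^ 2 / M))
            ≤ T * (1 - (i : ℝ) * a - ((d - i : ℕ) : ℝ) * b) :=
              mul_le_mul_of_nonneg_left hyb hT0.le
          _ ≤ N1 * N2 := hN12_lb
      have h2 : T * (1 - 2 / q * ((d : ℝ) ^ 2 / M)) * Du ≤ (N1 * N2) * P := by
        refine mul_le_mul hTb hD_ub hD0.le (mul_nonneg hN1_0 hN2_0)
      calc cc * T * (1 - 2 / q * ((d : ℝ) ^ 2 / M)) * Du
          = cc * (T * (1 - 2 / q * ((d : ℝ) ^ 2 / M)) * Du) := by ring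
        _ ≤ cc * ((N1 * N2) * P) := mul_le_mul_of_nonneg_left h2 hcc0.le
        _ = cc * N1 * N2 * P := by ring
  -- the first conclusion
  have hΔM : (d : ℝ) ^ 2 / M ≤ (Δ : ℝ) ^ 2 / M := by
    have h := pow_le_pow_left₀ hd0 hdΔR 2
    gcongr
  have habs1 : |hyperProb M k d i - tgt| ≤ K1 * ((Δ : ℝ) ^ 2 / M) * tgt := by
    rw [abs_sub_le_iff]
    constructor
    · have h1 : hyperProb M k d i - tgt ≤ tgt * ((d : ℝ) ^ 2 / M) := by
        linarith only [hupper]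
      have h3 : tgt * ((d : ℝ) ^ 2 / M) ≤ tgt * ((Δ : ℝ) ^ 2 / M) :=
        mul_le_mul_of_nonneg_left hΔM htgt0.le
      have h4 : 1 * (((Δ : ℝ) ^ 2 / M) * tgt) ≤ K1 * (((Δ : ℝ) ^ 2 / M) * tgt) :=
        mul_le_mul_of_nonneg_right hK1_1
          (mul_nonneg (by positivity) htgt0.le)
      linarith only [h1, h3, h4]
    · have h1 : tgt - hyperProb M k d i ≤ tgt * (2 / q * ((d : ℝ) ^ 2 / M)) := by
        linarith only [hlower]
      have h5 : (2 / q) * ((d : ℝ) ^ 2 / M) ≤ (2 / q) * ((Δ : ℝ) ^ 2 / M) :=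
        mul_le_mul_of_nonneg_left hΔM (by positivity)
      have h6 : (2 / q) * ((Δ : ℝ) ^ 2 / M) ≤ K1 * ((Δ : ℝ) ^ 2 / M) :=
        mul_le_mul_of_nonneg_right hK1_q (by positivity)
      have h7 : tgt * ((2 / q) * ((d : ℝ) ^ 2 / M)) ≤ tgt * (K1 * ((Δ : ℝ) ^ 2 / M)) :=
        mul_le_mul_of_nonneg_left (by linarith only [h5, h6]) htgt0.le
      linarith only [h1, h7]
  constructor
  · -- first conclusion
    rw [← htgt_def]
    have h0 : 0 ≤ ((Δ : ℝ) ^ 2 / M) * tgt := mul_nonneg (by positivity) htgt0.le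
    have h1 : K1 * (((Δ : ℝ) ^ 2 / M) * tgt) ≤ (K1 + K2) * (((Δ : ℝ) ^ 2 / M) * tgt) :=
      mul_le_mul_of_nonneg_right (by linarith only [hK20]) h0
    linarith only [habs1, h1]
  -- second conclusion
  rw [← hS_def]
  obtain ⟨γ, hγ_def⟩ : ∃ x : ℝ,
    x = A / (c1 * q) * Real.log n / (n : ℝ) ^ ((7 : ℝ) / 18) := ⟨_, rfl⟩
  have hrp0 : (0 : ℝ) < (n : ℝ) ^ ((7 : ℝ) / 18) := Real.rpow_pos_of_pos hn0R _
  have hγ0 : 0 < γ := by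
    rw [hγ_def]
    exact div_pos (mul_pos (by positivity) (by linarith only [hlog1])) hrp0
  have hγ14 : γ ≤ 1 / 4 := by
    rw [hγ_def, div_le_iff₀ hrp0]
    have h1 : 2 * (A / (c1 * q) * Real.log n) = 2 * A / (c1 * q) * Real.log n := by ring
    linarith only [he4, h1]
  have hs0 : (0 : ℝ) < Real.sqrt n := Real.sqrt_pos.2 hn0R
  have hss : Real.sqrt n * Real.sqrt n = (n : ℝ) := Real.mul_self_sqrt hn0R.le
  obtain ⟨η, hη_def⟩ : ∃ x : ℝ, x = A * Real.sqrt n * Real.log n / M := ⟨_, rfl⟩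
  have hη0 : 0 ≤ η := by rw [hη_def]; positivity
  have he' : |(k : ℝ) / M - p| ≤ η := by
    rw [hη_def]
    have heq : ((k : ℝ) - p * M) / M = (k : ℝ) / M - p := by
      rw [sub_div, mul_div_assoc, div_self hM0R.ne', mul_one]
    rw [← heq, abs_div, abs_of_pos hM0R]
    exact (div_le_div_iff_of_pos_right hM0R).2 hkp
  have hη_le : η ≤ A / c1 * Real.log n / Real.sqrt n := by
    rw [hη_def, div_le_div_iff₀ hM0R hs0]
    have h1 : A * Real.sqrt n * Real.log n * Real.sqrt n = A * n * Real.log n := by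
      linear_combination (A * Real.log n) * hss
    have h2 : A / c1 * Real.log n * (c1 * n) ≤ A / c1 * Real.log n * M :=
      mul_le_mul_of_nonneg_left hM1 (by positivity)
    have h3 : A / c1 * Real.log n * (c1 * n) = A * n * Real.log n := by
      field_simp
    linarith only [h1, h2, h3]
  have hηq2 : η ≤ q / 2 := by
    have h1 : q * (A / (c1 * q) * Real.log n) = A / c1 * Real.log n := by
      field_simp
    have h2 : q * (A / (c1 * q) * Real.log n) ≤ q * (1 / 2 * Real.sqrt n) :=
      mul_le_mul_of_nonneg_left he5 hq0.le
    have h3 : A / c1 * Real.log n / Real.sqrt n ≤ q / 2 := by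
      rw [div_le_iff₀ hs0]; linarith only [h1, h2]
    linarith only [hη_le, h3]
  have hUq : η / q ≤ 1 / 2 := by rw [div_le_iff₀ hq0]; linarith only [hηq2, hq0]
  -- d * (η/q) ≤ γ
  have hd_n19 : (d : ℝ) ≤ (n : ℝ) ^ ((1 : ℝ) / 9) := hdΔR.trans hΔn
  have h190 : (0 : ℝ) < (n : ℝ) ^ ((1 : ℝ) / 9) := Real.rpow_pos_of_pos hn0R _
  have hrpid : (n : ℝ) ^ ((1 : ℝ) / 9) * (n : ℝ) ^ ((7 : ℝ) / 18) = Real.sqrt n := by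
    rw [Real.sqrt_eq_rpow, ← Real.rpow_add hn0R]; norm_num
  have hηq_le : η / q ≤ A / (c1 * q) * Real.log n / Real.sqrt n := by
    have heq : A / (c1 * q) * Real.log n / Real.sqrt n
        = (A / c1 * Real.log n / Real.sqrt n) / q := by
      field_simp
    rw [heq]
    exact (div_le_div_iff_of_pos_right hq0).2 hη_le
  have hγeq : (n : ℝ) ^ ((1 : ℝ) / 9) * (A / (c1 * q) * Real.log n / Real.sqrt n) = γ := by
    rw [hγ_def, ← hrpid]
    field_simp
  have hηq0 : 0 ≤ η / q := by positivity
  have hdγ : (d : ℝ) * (η / q) ≤ γ := by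
    rw [← hγeq]
    exact mul_le_mul hd_n19 hηq_le hηq0 h190.le
  -- the deviation of k/M from p
  obtain ⟨e, he_def⟩ : ∃ x : ℝ, x = (k : ℝ) / M - p := ⟨_, rfl⟩
  have heη : |e| ≤ η := he_def ▸ he'
  have hax_def : p * (1 + |e| / p) = p + |e| := by field_simp
  have hax_def' : p * (1 - |e| / p) = p - |e| := by field_simp
  have h1p0 : (0 : ℝ) < 1 - p := by linarith
  have hbx_def : (1 - p) * (1 + |e| / (1 - p)) = (1 - p) + |e| := by
    field_simp [h1p0.ne']
  have hbx_def' : (1 - p) * (1 - |e| / (1 - p)) = (1 - p) - |e| := by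
    field_simp [h1p0.ne']
  have he_abs : -|e| ≤ e ∧ e ≤ |e| := ⟨neg_abs_le e, le_abs_self e⟩
  have heq2 : |e| ≤ q / 2 := le_trans heη hηq2
  have hap : |e| / p ≤ η / q := by
    have h1 : |e| / p ≤ η / p := (div_le_div_iff_of_pos_right hp0).2 heη
    have h2 : η / p ≤ η / q := div_le_div_of_nonneg_left hη0 hq0 hqp
    linarith only [h1, h2]
  have hbp : |e| / (1 - p) ≤ η / q := by
    have h1 : |e| / (1 - p) ≤ η / (1 - p) := (div_le_div_iff_of_pos_right (by linarith)).2 heη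
    have h2 : η / (1 - p) ≤ η / q := div_le_div_of_nonneg_left hη0 hq0 hq1p
    linarith only [h1, h2]
  have hap0 : 0 ≤ |e| / p := by positivity
  have hbp0 : 0 ≤ |e| / (1 - p) := div_nonneg (abs_nonneg e) (by linarith)
  have hap1 : |e| / p ≤ 1 := by linarith only [hap, hUq]
  have hbp1 : |e| / (1 - p) ≤ 1 := by linarith only [hbp, hUq]
  have hkM : (k : ℝ) / M = p + e := by rw [he_def]; ring
  have hkM0 : (0 : ℝ) ≤ (k : ℝ) / M := by positivity
  have h1x0 : (0 : ℝ) ≤ 1 - (k : ℝ) / M := by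
    rw [hkM]
    linarith only [he_abs.2, heq2, hq1p, hq0]
  -- power bounds
  have hx_ub : ((k : ℝ) / M) ^ i ≤ p ^ i * (1 + |e| / p) ^ i := by
    rw [← mul_pow]
    refine pow_le_pow_left₀ hkM0 ?_ i
    rw [hkM, hax_def]
    linarith only [he_abs.2]
  have hx_lb : p ^ i * (1 - |e| / p) ^ i ≤ ((k : ℝ) / M) ^ i := by
    rw [← mul_pow]
    refine pow_le_pow_left₀ ?_ ?_ i
    · rw [hax_def']; linarith only [heq2, hqp, hq0]
    · rw [hkM, hax_def']; linarith only [he_abs.1]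
  have h1x_ub : (1 - (k : ℝ) / M) ^ (d - i) ≤ (1 - p) ^ (d - i) * (1 + |e| / (1 - p)) ^ (d - i) := by
    rw [← mul_pow]
    refine pow_le_pow_left₀ h1x0 ?_ (d - i)
    rw [hkM, hbx_def]
    linarith only [he_abs.1]
  have h1x_lb : (1 - p) ^ (d - i) * (1 - |e| / (1 - p)) ^ (d - i) ≤ (1 - (k : ℝ) / M) ^ (d - i) := by
    rw [← mul_pow]
    refine pow_le_pow_left₀ ?_ ?_ (d - i)
    · rw [hbx_def']; linarith only [heq2, hq1p, hq0]
    · rw [hkM, hbx_def']; linarith only [he_abs.2]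
  -- tgt in terms of k/M
  have htgt_x : tgt = cc * (((k : ℝ) / M) ^ i * (1 - (k : ℝ) / M) ^ (d - i)) := by
    have h2k_eq : 2 * (k : ℝ) = 2 * (M : ℝ) * ((k : ℝ) / M) := by
      field_simp
    have h2Mk_eq : 2 * (M : ℝ) - 2 * (k : ℝ) = 2 * (M : ℝ) * (1 - (k : ℝ) / M) := by
      field_simp
    have hPsplit : (2 * (M : ℝ)) ^ d = (2 * (M : ℝ)) ^ i * (2 * (M : ℝ)) ^ (d - i) := by
      rw [← pow_add]; congr 1; omega
    rw [htgtT, hT_def, hP_def, h2Mk_eq, h2k_eq, hPsplit]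
    simp only [mul_pow]
    rw [div_eq_iff (by positivity : (2 : ℝ) ^ i * (M : ℝ) ^ i * ((2 : ℝ) ^ (d - i) * (M : ℝ) ^ (d - i)) ≠ 0)]
    ring
  -- product lower bound
  have hpair2 := pair_bound hap0 hap1 hbp0 hbp1 i (d - i)
  rw [hcastdi] at hpair2
  have hsum_le : (i : ℝ) * (|e| / p) + ((d : ℝ) - i) * (|e| / (1 - p)) ≤ (d : ℝ) * (η / q) := by
    have h1 : (i : ℝ) * (|e| / p) ≤ (i : ℝ) * (η / q) :=
      mul_le_mul_of_nonneg_left hap (Nat.cast_nonneg i)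
    have h2 : ((d : ℝ) - i) * (|e| / (1 - p)) ≤ ((d : ℝ) - i) * (η / q) :=
      mul_le_mul_of_nonneg_left hbp hdiR0
    have h3 : (i : ℝ) * (η / q) + ((d : ℝ) - i) * (η / q) = (d : ℝ) * (η / q) := by ring
    linarith only [h1, h2, h3]
  have hprod_lb : 1 - γ ≤ (1 - |e| / p) ^ i * (1 - |e| / (1 - p)) ^ (d - i) := by
    have := hpair2
    have h4 : 1 - γ ≤ 1 - (i : ℝ) * (|e| / p) - ((d : ℝ) - i) * (|e| / (1 - p)) := by
      linarith only [hsum_le, hdγ]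
    linarith only [this, h4]
  have hprodl0 : (0 : ℝ) < 1 - γ := by linarith only [hγ14]
  -- tgt vs S
  have htgtS_lb : S * (1 - γ) ≤ tgt := by
    have h1 : S * (1 - γ) ≤ S * ((1 - |e| / p) ^ i * (1 - |e| / (1 - p)) ^ (d - i)) :=
      mul_le_mul_of_nonneg_left hprod_lb hS0.le
    have h2 : S * ((1 - |e| / p) ^ i * (1 - |e| / (1 - p)) ^ (d - i))
        = cc * ((p ^ i * (1 - |e| / p) ^ i) * ((1 - p) ^ (d - i) * (1 - |e| / (1 - p)) ^ (d - i))) := by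
      rw [hS_def, hcc_def]; ring
    have h3 : (p ^ i * (1 - |e| / p) ^ i) * ((1 - p) ^ (d - i) * (1 - |e| / (1 - p)) ^ (d - i))
        ≤ ((k : ℝ) / M) ^ i * (1 - (k : ℝ) / M) ^ (d - i) := by
      refine mul_le_mul hx_lb h1x_lb ?_ ?_
      · exact mul_nonneg (pow_nonneg (by linarith) _) (pow_nonneg (by linarith only [hbp1]) _)
      · exact pow_nonneg hkM0 i
    have h4 := mul_le_mul_of_nonneg_left h3 hcc0.le
    rw [htgt_x]
    linarith only [h1, h2, h4]
  have htgtS_ub : tgt ≤ S * (1 + 2 * γ) := by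
    have h3 : ((k : ℝ) / M) ^ i * (1 - (k : ℝ) / M) ^ (d - i)
        ≤ (p ^ i * (1 + |e| / p) ^ i) * ((1 - p) ^ (d - i) * (1 + |e| / (1 - p)) ^ (d - i)) := by
      refine mul_le_mul hx_ub h1x_ub (pow_nonneg h1x0 _) ?_
      exact mul_nonneg (pow_nonneg hp0.le _) (pow_nonneg (by linarith only [hap0]) _)
    have h4 := mul_le_mul_of_nonneg_left h3 hcc0.le
    -- now bound the correction product
    have s1 : (1 + |e| / p) ≤ (1 - |e| / p)⁻¹ := by
      rw [inv_eq_one_div, le_div_iff₀ (by linarith only [hap1, hap, hUq] : (0:ℝ) < 1 - |e| / p)]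
      nlinarith only [hap0]
    have s2 : (1 + |e| / (1 - p)) ≤ (1 - |e| / (1 - p))⁻¹ := by
      rw [inv_eq_one_div, le_div_iff₀ (by linarith only [hbp1, hbp, hUq] : (0:ℝ) < 1 - |e| / (1 - p))]
      nlinarith only [hbp0]
    have s3 : (1 + |e| / p) ^ i * (1 + |e| / (1 - p)) ^ (d - i)
        ≤ ((1 - |e| / p) ^ i * (1 - |e| / (1 - p)) ^ (d - i))⁻¹ := by
      rw [mul_inv, ← inv_pow, ← inv_pow]
      refine mul_le_mul (pow_le_pow_left₀ (by linarith only [hap0]) s1 i)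
        (pow_le_pow_left₀ (by linarith only [hbp0]) s2 (d - i)) ?_ ?_
      · exact pow_nonneg (by linarith only [hbp0]) _
      · exact pow_nonneg (inv_nonneg.2 (by linarith only [hap, hUq])) _
    have s4 : ((1 - |e| / p) ^ i * (1 - |e| / (1 - p)) ^ (d - i))⁻¹ ≤ (1 - γ)⁻¹ := by
      rw [inv_eq_one_div, inv_eq_one_div]
      exact one_div_le_one_div_of_le hprodl0 hprod_lb
    have s5 : (1 - γ)⁻¹ ≤ 1 + 2 * γ := by
      rw [inv_eq_one_div, div_le_iff₀ hprodl0]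
      nlinarith only [hγ0, hγ14]
    have s6 : (1 + |e| / p) ^ i * (1 + |e| / (1 - p)) ^ (d - i) ≤ 1 + 2 * γ := by
      linarith only [s3, s4, s5]
    have h5 : cc * ((p ^ i * (1 + |e| / p) ^ i) * ((1 - p) ^ (d - i) * (1 + |e| / (1 - p)) ^ (d - i)))
        = S * ((1 + |e| / p) ^ i * (1 + |e| / (1 - p)) ^ (d - i)) := by
      rw [hS_def, hcc_def]; ring
    have h6 : S * ((1 + |e| / p) ^ i * (1 + |e| / (1 - p)) ^ (d - i)) ≤ S * (1 + 2 * γ) :=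
      mul_le_mul_of_nonneg_left s6 hS0.le
    rw [htgt_x]
    linarith only [h4, h5, h6]
  have habs2 : |tgt - S| ≤ 2 * γ * S := by
    rw [abs_sub_le_iff]
    constructor
    · nlinarith only [htgtS_ub, hS0, hγ0]
    · nlinarith only [htgtS_lb, hS0, hγ0]
  -- Δ²/M versus log n / n^(7/18)
  have hΔM2 : (Δ : ℝ) ^ 2 / M ≤ 1 / c1 * (Real.log n / (n : ℝ) ^ ((7 : ℝ) / 18)) := by
    have h1 : (Δ : ℝ) ^ 2 * (n : ℝ) ^ ((7 : ℝ) / 18)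
        ≤ (n : ℝ) ^ ((2 : ℝ) / 9) * (n : ℝ) ^ ((7 : ℝ) / 18) :=
      mul_le_mul_of_nonneg_right hΔsq hrp0.le
    have h2 : (n : ℝ) ^ ((2 : ℝ) / 9) * (n : ℝ) ^ ((7 : ℝ) / 18) = (n : ℝ) ^ ((11 : ℝ) / 18) := by
      rw [← Real.rpow_add hn0R]; norm_num
    have h3 : (n : ℝ) ^ ((11 : ℝ) / 18) ≤ (n : ℝ) ^ ((1 : ℝ)) :=
      Real.rpow_le_rpow_of_exponent_le hn1R (by norm_num)
    have h4 : (n : ℝ) ^ ((1 : ℝ)) = (n : ℝ) := Real.rpow_one _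
    have h5 : (n : ℝ) ≤ Real.log n * n := by nlinarith only [hlog1, hn0R]
    have hA1 : (Δ : ℝ) ^ 2 * (n : ℝ) ^ ((7 : ℝ) / 18) ≤ Real.log n * n := by
      rw [h2] at h1; rw [h4] at h3; linarith only [h1, h3, h5]
    have h6 : (Δ : ℝ) ^ 2 / M ≤ (Δ : ℝ) ^ 2 / (c1 * n) :=
      div_le_div_of_nonneg_left (sq_nonneg _) (by positivity) hM1
    have h7 : (Δ : ℝ) ^ 2 / (c1 * n) ≤ 1 / c1 * (Real.log n / (n : ℝ) ^ ((7 : ℝ) / 18)) := by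
      have heq : 1 / c1 * (Real.log n / (n : ℝ) ^ ((7 : ℝ) / 18))
          = Real.log n / (c1 * (n : ℝ) ^ ((7 : ℝ) / 18)) := by ring
      rw [heq, div_le_div_iff₀ (by positivity) (by positivity)]
      have := mul_le_mul_of_nonneg_left hA1 hc1.le
      nlinarith only [this]
    linarith only [h6, h7]
  -- assemble the second conclusion
  have htri := abs_sub_le (hyperProb M k d i) tgt S
  have hL0 : 0 ≤ Real.log n / (n : ℝ) ^ ((7 : ℝ) / 18) := by positivity
  have ht2S : tgt ≤ 2 * S := by nlinarith only [htgtS_ub, hγ14, hS0, hγ0]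
  have hterm1 : K1 * ((Δ : ℝ) ^ 2 / M) * tgt
      ≤ 2 * K1 / c1 * (Real.log n / (n : ℝ) ^ ((7 : ℝ) / 18)) * S := by
    have hm : ((Δ : ℝ) ^ 2 / M) * tgt
        ≤ (1 / c1 * (Real.log n / (n : ℝ) ^ ((7 : ℝ) / 18))) * (2 * S) :=
      mul_le_mul hΔM2 ht2S htgt0.le (by positivity)
    calc K1 * ((Δ : ℝ) ^ 2 / M) * tgt = K1 * (((Δ : ℝ) ^ 2 / M) * tgt) := by ring
      _ ≤ K1 * (1 / c1 * (Real.log n / (n : ℝ) ^ ((7 : ℝ) / 18)) * (2 * S)) :=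
          mul_le_mul_of_nonneg_left hm hK10.le
      _ = 2 * K1 / c1 * (Real.log n / (n : ℝ) ^ ((7 : ℝ) / 18)) * S := by ring
  have hγL : γ = A / (c1 * q) * (Real.log n / (n : ℝ) ^ ((7 : ℝ) / 18)) := by
    rw [hγ_def]; ring
  have hterm2 : 2 * γ * S ≤ 4 * A / (c1 * q) * (Real.log n / (n : ℝ) ^ ((7 : ℝ) / 18)) * S := by
    rw [hγL]
    have h0 : 0 ≤ A / (c1 * q) * (Real.log n / (n : ℝ) ^ ((7 : ℝ) / 18)) * S :=
      mul_nonneg (by positivity) hS0.le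
    calc 2 * (A / (c1 * q) * (Real.log n / (n : ℝ) ^ ((7 : ℝ) / 18))) * S
        = 2 * (A / (c1 * q) * (Real.log n / (n : ℝ) ^ ((7 : ℝ) / 18)) * S) := by ring
      _ ≤ 4 * (A / (c1 * q) * (Real.log n / (n : ℝ) ^ ((7 : ℝ) / 18)) * S) := by
          linarith only [h0]
      _ = 4 * A / (c1 * q) * (Real.log n / (n : ℝ) ^ ((7 : ℝ) / 18)) * S := by ring
  have hK2fold : 2 * K1 / c1 * (Real.log n / (n : ℝ) ^ ((7 : ℝ) / 18)) * S
      + 4 * A / (c1 * q) * (Real.log n / (n : ℝ) ^ ((7 : ℝ) / 18)) * S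
      = K2 * (Real.log n / (n : ℝ) ^ ((7 : ℝ) / 18)) * S := by
    rw [hK2_def]; ring
  have hfin : K2 * (Real.log n / (n : ℝ) ^ ((7 : ℝ) / 18)) * S
      ≤ (K1 + K2) * (Real.log n / (n : ℝ) ^ ((7 : ℝ) / 18)) * S := by
    have h0 : 0 ≤ (Real.log n / (n : ℝ) ^ ((7 : ℝ) / 18)) * S := mul_nonneg hL0 hS0.le
    nlinarith only [h0, hK10]
  calc |hyperProb M k d i - S| ≤ |hyperProb M k d i - tgt| + |tgt - S| := htri
    _ ≤ K1 * ((Δ : ℝ) ^ 2 / M) * tgt + 2 * γ * S := add_le_add habs1 habs2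
    _ ≤ 2 * K1 / c1 * (Real.log n / (n : ℝ) ^ ((7 : ℝ) / 18)) * S
        + 4 * A / (c1 * q) * (Real.log n / (n : ℝ) ^ ((7 : ℝ) / 18)) * S :=
          add_le_add hterm1 hterm2
    _ = K2 * (Real.log n / (n : ℝ) ^ ((7 : ℝ) / 18)) * S := hK2fold
    _ ≤ (K1 + K2) * (Real.log n / (n : ℝ) ^ ((7 : ℝ) / 18)) * S := hfin
end
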